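/- arXiv:2205.02365 — 2 statements merged into one kernel-verified Lean document; each statement's English description precedes it below -/
import Mathlib

section
/- The map sending the 4×4 Kronecker product ([[1,v₁],[0,z₁]] ⊗ [[1,v₂],[0,z₂]]) to its upper-left 3×3 submatrix is multiplicative: the submatrix of a product of two such Kronecker products equals the product of their submatrices. -/
/-! In lexicographic order a Kronecker product of upper-triangular matrices is upper triangular,
so its row `(1,1)` vanishes off the diagonal. The index `(1,1)` is the only one that `subIdx`
omits, hence it contributes nothing to the entries of a product indexed by `subIdx`. -/

open Kronecker

/-- The first three indices of `Fin 2 × Fin 2` in lexicographic order: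
`0 ↦ (0,0)`, `1 ↦ (0,1)`, `2 ↦ (1,0)`. -/
def subIdx : Fin 3 → Fin 2 × Fin 2 := ![(0, 0), (0, 1), (1, 0)]

namespace Matrix

variable {ι m : Type*} [Fintype ι] [Fintype m] {α : Type*} [NonUnitalNonAssocSemiring α]

theorem submatrix_mul_of_forall_notMem_range {e : ι → m} (he : Function.Injective e)
    (M N : Matrix m m α) (hN : ∀ k ∉ Set.range e, ∀ j, N k (e j) = 0) :
    (M * N).submatrix e e = M.submatrix e e * N.submatrix e e := by
  ext i j
  simp only [submatrix_apply, mul_apply]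
  refine (Fintype.sum_of_injective e he _ _ (fun k hk => ?_) fun _ => rfl).symm
  rw [hN k hk j, mul_zero]

end Matrix

theorem notMem_range_subIdx {k : Fin 2 × Fin 2} (hk : k ∉ Set.range subIdx) : k = (1, 1) := by
  contrapose! hk
  rcases k with ⟨a, b⟩
  fin_cases a <;> fin_cases b
  exacts [⟨0, rfl⟩, ⟨1, rfl⟩, ⟨2, rfl⟩, absurd rfl hk]

theorem kronecker_apply_one_one_subIdx {α : Type*} [MulZeroClass α]
    {A B : Matrix (Fin 2) (Fin 2) α} (hA : A 1 0 = 0) (hB : B 1 0 = 0) (j : Fin 3) :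
    (A ⊗ₖ B) (1, 1) (subIdx j) = 0 := by
  fin_cases j <;> simp [subIdx, hA, hB]

/-- Taking the upper-left 3×3 submatrix of a 4×4 Kronecker product of 2×2
upper-triangular matrices with unit `(1,1)` entry is multiplicative. -/
theorem subflattening_submatrix_multiplicative (v₁ z₁ v₂ z₂ v₁' z₁' v₂' z₂' : ℝ) :
    ((((!![1, v₁; 0, z₁] : Matrix (Fin 2) (Fin 2) ℝ) ⊗ₖ !![1, v₂; 0, z₂]) *
        ((!![1, v₁'; 0, z₁'] : Matrix (Fin 2) (Fin 2) ℝ) ⊗ₖ !![1, v₂'; 0, z₂'])).submatrix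
          subIdx subIdx) =
      (((!![1, v₁; 0, z₁] : Matrix (Fin 2) (Fin 2) ℝ) ⊗ₖ !![1, v₂; 0, z₂]).submatrix
          subIdx subIdx) *
        (((!![1, v₁'; 0, z₁'] : Matrix (Fin 2) (Fin 2) ℝ) ⊗ₖ !![1, v₂'; 0, z₂']).submatrix
          subIdx subIdx) := by
  have subIdx_injective : Function.Injective subIdx := by decide
  refine Matrix.submatrix_mul_of_forall_notMem_range subIdx_injective _ _ fun k hk j => ?_
  rw [notMem_range_subIdx hk]
  exact kronecker_apply_one_one_subIdx rfl rfl j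
end

section
/- For any two distinct splits {A,B} and {A',B'} of a set X that are both displayed by a common tree T (i.e., compatible), at least one of the intersections A∩A', A∩B', B∩A', B∩B' is empty. -/
/-- A tree `T` with vertex set `V` and leaf labeling `f : X → V` displays the split
`{A, B}` of `X` if there is an edge `{u, v}` of `T` such that, after deleting that edge,
`A` is exactly the set of taxa whose vertex lies in the component of `u`, and `B` is
exactly the set of taxa whose vertex lies in the component of `v`. -/
def Displays {V X : Type*} (T : SimpleGraph V) (f : X → V) (A B : Set X) : Prop :=
  ∃ u v : V, T.Adj u v ∧
    (∀ x : X, x ∈ A ↔ (T.deleteEdges {s(u, v)}).Reachable (f x) u) ∧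
    (∀ x : X, x ∈ B ↔ (T.deleteEdges {s(u, v)}).Reachable (f x) v)

/-!
Deleting an edge `uv` of a tree leaves two components, `edgeSide u v ∋ u` and `edgeSide v u ∋ v`.
If an endpoint `u'` of a second edge `u'v'` lies outside such a component `C`, no walk inside `C`
meets `u'v'`, so `C` stays connected in `T - u'v'` and misses one of the two sides of `u'v'`.
Since `u'` cannot lie on both sides of `uv`, one of the four intersections is empty.
-/

namespace SimpleGraph

variable {V : Type*} {G : SimpleGraph V} {a b u v u' v' w x z : V}

lemma Reachable.deleteEdges_of_not_reachable (hxw : G.Reachable x w) (ha : ¬G.Reachable a w) :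
    (G.deleteEdges {s(a, b)}).Reachable x w := by
  classical
  obtain ⟨p⟩ := hxw
  have hap : a ∉ p.support := fun h ↦ ha ⟨p.dropUntil a h⟩
  exact (p.toDeleteEdge _ fun h ↦ hap (p.fst_mem_support_of_mem_edges h)).reachable

def edgeSide (G : SimpleGraph V) (u v : V) : Set V :=
  {x | (G.deleteEdges {s(u, v)}).Reachable x u}

lemma mem_edgeSide : x ∈ G.edgeSide u v ↔ (G.deleteEdges {s(u, v)}).Reachable x u := .rfl

lemma mem_edgeSide_swap : x ∈ G.edgeSide v u ↔ (G.deleteEdges {s(u, v)}).Reachable x v := by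
  rw [mem_edgeSide, Sym2.eq_swap]

lemma IsBridge.disjoint_edgeSide (h : G.IsBridge s(u, v)) :
    Disjoint (G.edgeSide u v) (G.edgeSide v u) :=
  Set.disjoint_left.mpr fun _ hu hv ↦ isBridge_iff.mp h (hu.symm.trans (mem_edgeSide_swap.mp hv))

lemma Connected.mem_edgeSide_or (hG : G.Connected) (u v x : V) :
    x ∈ G.edgeSide u v ∨ x ∈ G.edgeSide v u := by
  rw [mem_edgeSide, mem_edgeSide_swap]
  set H := G.deleteEdges {s(u, v)}
  suffices ∀ {y} (p : G.Walk x y), H.Reachable y u ∨ H.Reachable y v →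
      H.Reachable x u ∨ H.Reachable x v from this (hG.preconnected x u).some (.inl .rfl)
  intro y p
  induction p with
  | nil => exact id
  | @cons a b _ hab _ ih =>
    intro hy
    by_cases he : s(a, b) = s(u, v)
    · rcases Sym2.eq_iff.mp he with ⟨rfl, -⟩ | ⟨rfl, -⟩
      exacts [.inl .rfl, .inr .rfl]
    · have hadj : H.Adj a b := deleteEdges_adj.mpr ⟨hab, he⟩
      exact (ih hy).imp hadj.reachable.trans hadj.reachable.trans

lemma reachable_deleteEdges_of_mem_edgeSide (ha : a ∉ G.edgeSide w z)
    (hx : x ∈ G.edgeSide w z) : (G.deleteEdges {s(a, b)}).Reachable x w :=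
  (Reachable.deleteEdges_of_not_reachable hx ha).mono (deleteEdges_mono (deleteEdges_le _))

lemma IsTree.isBridge (hG : G.IsTree) (huv : G.Adj u v) : G.IsBridge s(u, v) :=
  isAcyclic_iff_forall_adj_isBridge.mp hG.isAcyclic huv

lemma IsTree.disjoint_edgeSide_or_of_notMem (hG : G.IsTree) (huv : G.Adj u v)
    (hu : u ∉ G.edgeSide w z) :
    Disjoint (G.edgeSide w z) (G.edgeSide u v) ∨ Disjoint (G.edgeSide w z) (G.edgeSide v u) := by
  have hside (x) (hx : x ∈ G.edgeSide w z) :=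
    reachable_deleteEdges_of_mem_edgeSide (b := v) hu hx
  rcases hG.connected.mem_edgeSide_or u v w with hw | hw
  · exact .inr <| (hG.isBridge huv).disjoint_edgeSide.mono_left fun x hx ↦ (hside x hx).trans hw
  · refine .inl <| (hG.isBridge huv).disjoint_edgeSide.symm.mono_left fun x hx ↦ ?_
    exact mem_edgeSide_swap.mpr ((hside x hx).trans (mem_edgeSide_swap.mp hw))

theorem IsTree.disjoint_edgeSide (hG : G.IsTree) (huv : G.Adj u v) (hu'v' : G.Adj u' v') :
    Disjoint (G.edgeSide u v) (G.edgeSide u' v') ∨ Disjoint (G.edgeSide u v) (G.edgeSide v' u') ∨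
      Disjoint (G.edgeSide v u) (G.edgeSide u' v') ∨
        Disjoint (G.edgeSide v u) (G.edgeSide v' u') := by
  by_cases hu' : u' ∈ G.edgeSide v u
  · have : u' ∉ G.edgeSide u v := fun h ↦
      (hG.isBridge huv).disjoint_edgeSide.notMem_of_mem_left h hu'
    exact (hG.disjoint_edgeSide_or_of_notMem hu'v' this).elim .inl (.inr ∘ .inl)
  · exact .inr (.inr (hG.disjoint_edgeSide_or_of_notMem hu'v' hu'))

end SimpleGraph

theorem compatible_splits_inter_empty_general {V X : Type*} (T : SimpleGraph V) (hT : T.IsTree)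
    (f : X → V) (A B A' B' : Set X)
    (h : Displays T f A B) (h' : Displays T f A' B') :
    A ∩ A' = ∅ ∨ A ∩ B' = ∅ ∨ B ∩ A' = ∅ ∨ B ∩ B' = ∅ := by
  obtain ⟨u, v, huv, hA, hB⟩ := h
  obtain ⟨u', v', hu'v', hA', hB'⟩ := h'
  obtain rfl : A = f ⁻¹' T.edgeSide u v := Set.ext hA
  obtain rfl : B = f ⁻¹' T.edgeSide v u :=
    Set.ext fun x ↦ (hB x).trans SimpleGraph.mem_edgeSide_swap.symm
  obtain rfl : A' = f ⁻¹' T.edgeSide u' v' := Set.ext hA'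
  obtain rfl : B' = f ⁻¹' T.edgeSide v' u' :=
    Set.ext fun x ↦ (hB' x).trans SimpleGraph.mem_edgeSide_swap.symm
  simp only [← Set.disjoint_iff_inter_eq_empty]
  exact (hT.disjoint_edgeSide huv hu'v').imp (·.preimage f)
    (.imp (·.preimage f) (.imp (·.preimage f) (·.preimage f)))

/-- If two distinct splits `{A,B}` and `{A',B'}` of a taxon set `X` are both displayed
by a common tree `T` (so they are compatible), then at least one of the intersections
`A ∩ A'`, `A ∩ B'`, `B ∩ A'`, `B ∩ B'` is empty. -/
theorem compatible_splits_inter_empty {V X : Type*} (T : SimpleGraph V) (hT : T.IsTree)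
    (f : X → V) (A B A' B' : Set X)
    (h : Displays T f A B) (h' : Displays T f A' B')
    (hne : ({A, B} : Set (Set X)) ≠ {A', B'}) :
    A ∩ A' = ∅ ∨ A ∩ B' = ∅ ∨ B ∩ A' = ∅ ∨ B ∩ B' = ∅ :=
  compatible_splits_inter_empty_general T hT f A B A' B' h h'
end
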